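/- arXiv:1212.1404 — 7 statements merged into one kernel-verified Lean document; each statement's English description precedes it below -/
import Mathlib

section
/- Let A = D[y; δ] be an Ore extension of a commutative ring D by a derivation δ, and let f ∈ D. Then the principal ideal (f) of D is δ-invariant if and only if f is a normal element of A, i.e., fA = Af. -/
/-! `fA = Af` holds iff `f a ∈ Af` and `a f ∈ fA` for every `a`, and both conditions are closed
under sums and products, so it suffices to check them on the generators `D ∪ {y}` of `A`. On `D`
they hold by commutativity. If `δ f = c f`, the relation `y f = f y + δ f` gives
`f y = (y - c) f` and `y f = f (y + c)`. Conversely, `y f = f b` gives `δ f = f (b - y)` in `A`,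
and comparing constant coefficients in the basis `(y ^ n)` shows `δ f ∈ (f)`, which by the
Leibniz rule is the same as `δ`-invariance of `(f)`. -/

section Normal

variable {A : Type*} [Semiring A]

theorem setOf_mul_eq_iff (x : A) :
    {z : A | ∃ a, z = x * a} = {z : A | ∃ a, z = a * x} ↔
      (∀ a, ∃ b, x * a = b * x) ∧ ∀ a, ∃ b, a * x = x * b := by
  refine ⟨fun h => ⟨fun a => ?_, fun a => ?_⟩, fun ⟨hl, hr⟩ => ?_⟩
  · obtain ⟨b, hb⟩ : x * a ∈ {z : A | ∃ a, z = a * x} := h ▸ ⟨a, rfl⟩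
    exact ⟨b, hb⟩
  · obtain ⟨b, hb⟩ : a * x ∈ {z : A | ∃ a, z = x * a} := h ▸ ⟨a, rfl⟩
    exact ⟨b, hb⟩
  · ext z
    constructor
    · rintro ⟨a, rfl⟩
      exact hl a
    · rintro ⟨a, rfl⟩
      exact hr a

theorem exists_mul_eq_mul_of_closure_eq_top {s : Set A} (hs : Subsemiring.closure s = ⊤)
    (x : A) (h : ∀ a ∈ s, ∃ b, x * a = b * x) (a : A) : ∃ b, x * a = b * x := by
  have ha : a ∈ Subsemiring.closure s := hs ▸ Subsemiring.mem_top a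
  induction ha using Subsemiring.closure_induction with
  | mem a ha => exact h a ha
  | zero => exact ⟨0, by simp⟩
  | one => exact ⟨1, by simp⟩
  | add a a' _ _ ih ih' =>
    obtain ⟨b, hb⟩ := ih
    obtain ⟨b', hb'⟩ := ih'
    exact ⟨b + b', by rw [mul_add, add_mul, hb, hb']⟩
  | mul a a' _ _ ih ih' =>
    obtain ⟨b, hb⟩ := ih
    obtain ⟨b', hb'⟩ := ih'
    exact ⟨b * b', by rw [← mul_assoc, hb, mul_assoc, hb', mul_assoc]⟩

theorem exists_mul_eq_mul_of_closure_eq_top' {s : Set A} (hs : Subsemiring.closure s = ⊤)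
    (x : A) (h : ∀ a ∈ s, ∃ b, a * x = x * b) (a : A) : ∃ b, a * x = x * b := by
  have hs' : Subsemiring.closure (MulOpposite.unop ⁻¹' s) = ⊤ := by
    rw [← Subsemiring.op_closure, hs, Subsemiring.op_top]
  have hop : ∀ a ∈ MulOpposite.unop ⁻¹' s, ∃ b, MulOpposite.op x * a = b * MulOpposite.op x := by
    intro a ha
    obtain ⟨b, hb⟩ := h a.unop ha
    exact ⟨MulOpposite.op b, MulOpposite.unop_injective (by simpa using hb)⟩
  obtain ⟨b, hb⟩ := exists_mul_eq_mul_of_closure_eq_top hs' _ hop (MulOpposite.op a)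
  exact ⟨b.unop, by simpa using congrArg MulOpposite.unop hb⟩

end Normal

theorem forall_mem_span_singleton_iff_of_leibniz {D : Type*} [CommSemiring D] {δ : D → D}
    (hleib : ∀ a b, δ (a * b) = δ a * b + a * δ b) (f : D) :
    (∀ r ∈ Ideal.span {f}, δ r ∈ Ideal.span {f}) ↔ δ f ∈ Ideal.span {f} := by
  refine ⟨fun h => h f (Ideal.mem_span_singleton_self f), fun hf r hr => ?_⟩
  obtain ⟨d, rfl⟩ := Ideal.mem_span_singleton.mp hr
  rw [hleib]
  exact Ideal.add_mem _ (Ideal.mul_mem_right d _ hf)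
    (Ideal.mul_mem_right _ _ (Ideal.mem_span_singleton_self f))

section OreBasis

variable {D A : Type*} [CommRing D] [Ring A] (i : D →+* A) (y : A)

theorem closure_insert_range_eq_top
    (hsurj : Function.Surjective fun c : ℕ →₀ D => c.sum fun n d => i d * y ^ n) :
    Subsemiring.closure (insert y (Set.range i)) = ⊤ := by
  refine eq_top_iff.mpr fun a _ => ?_
  obtain ⟨c, rfl⟩ := hsurj a
  exact Subsemiring.sum_mem _ fun n _ =>
    Subsemiring.mul_mem _ (Subsemiring.subset_closure (Set.mem_insert_of_mem _ ⟨_, rfl⟩))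
      (Subsemiring.pow_mem _ (Subsemiring.subset_closure (Set.mem_insert _ _)) n)

theorem mem_span_singleton_of_map_eq_map_mul
    (hbasis : Function.Bijective fun c : ℕ →₀ D => c.sum fun n d => i d * y ^ n)
    {d f : D} {a : A} (h : i d = i f * a) : d ∈ Ideal.span {f} := by
  obtain ⟨c, rfl⟩ := hbasis.2 a
  -- `f • c` and `single 0 d` have the same image `i d`
  have hfc : f • c = Finsupp.single 0 d := hbasis.1 <| by
    dsimp only at h ⊢
    rw [Finsupp.sum_smul_index (fun n => by simp), Finsupp.sum_single_index (by simp), pow_zero,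
      mul_one, h, Finsupp.mul_sum]
    refine Finsupp.sum_congr fun n _ => ?_
    rw [map_mul, mul_assoc]
  have := DFunLike.congr_fun hfc 0
  rw [Finsupp.smul_apply, smul_eq_mul, Finsupp.single_eq_same] at this
  exact Ideal.mem_span_singleton'.mpr ⟨c 0, by rw [mul_comm, this]⟩

end OreBasis

theorem stmt6_general {D A : Type*} [CommRing D] [Ring A]
    (δ : D → D)
    (hleib : ∀ a b, δ (a * b) = δ a * b + a * δ b)
    (i : D →+* A) (y : A)
    (hrel : ∀ r : D, y * i r = i r * y + i (δ r))
    (hbasis : Function.Bijective fun c : ℕ →₀ D => c.sum fun n d => i d * y ^ n)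
    (f : D) :
    (∀ r ∈ Ideal.span {f}, δ r ∈ Ideal.span {f}) ↔
      {x : A | ∃ a : A, x = i f * a} = {x : A | ∃ a : A, x = a * i f} := by
  rw [forall_mem_span_singleton_iff_of_leibniz hleib, setOf_mul_eq_iff]
  have hgen := closure_insert_range_eq_top i y hbasis.2
  have hcomm (d : D) : i f * i d = i d * i f := by rw [← map_mul, ← map_mul, mul_comm]
  constructor
  · intro hf
    obtain ⟨c, hc⟩ := Ideal.mem_span_singleton'.mp hf
    refine ⟨exists_mul_eq_mul_of_closure_eq_top hgen _ ?_,
      exists_mul_eq_mul_of_closure_eq_top' hgen _ ?_⟩ <;>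
      simp only [Set.forall_mem_insert, Set.forall_mem_range]
    · exact ⟨⟨y - i c, by rw [sub_mul, hrel, ← map_mul, hc, add_sub_cancel_right]⟩,
        fun d => ⟨i d, hcomm d⟩⟩
    · exact ⟨⟨y + i c, by rw [hrel, mul_add, ← map_mul, mul_comm f c, hc]⟩,
        fun d => ⟨i d, (hcomm d).symm⟩⟩
  · rintro ⟨-, hright⟩
    obtain ⟨b, hb⟩ := hright y
    exact mem_span_singleton_of_map_eq_map_mul i y hbasis
      (show i (δ f) = i f * (b - y) by rw [mul_sub, ← hb, hrel, add_sub_cancel_left])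

/-- In an Ore extension `A = D[y; δ]` of a commutative ring `D` by a derivation `δ`,
the principal ideal `(f)` is `δ`-invariant iff `f` is a normal element of `A`
(`fA = Af`). -/
theorem stmt6 {D A : Type*} [CommRing D] [Ring A]
    (δ : D → D) (hadd : ∀ a b, δ (a + b) = δ a + δ b)
    (hleib : ∀ a b, δ (a * b) = δ a * b + a * δ b)
    (i : D →+* A) (y : A)
    (hrel : ∀ r : D, y * i r = i r * y + i (δ r))
    (hbasis : Function.Bijective fun c : ℕ →₀ D => c.sum fun n d => i d * y ^ n)
    (f : D) :
    (∀ r ∈ Ideal.span {f}, δ r ∈ Ideal.span {f}) ↔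
      {x : A | ∃ a : A, x = i f * a} = {x : A | ∃ a : A, x = a * i f} :=
  stmt6_general δ hleib i y hrel hbasis f
end

section
/- Let F be a field of characteristic 0, h ∈ F[x] a nonzero polynomial, and A_h the F-algebra generated by x, y with relation yx − xy = h. If J is a nonzero two-sided ideal of A_h, then J ∩ F[x] ≠ 0. -/
/-!
Write elements of `A` as `∑ dₖ yᵏ` with `dₖ ∈ F[x]`. Since `yⁿx - xyⁿ = n h yⁿ⁻¹ + (lower terms)`,
commuting `d yⁿ + (lower terms)` with `x` gives `n d h yⁿ⁻¹ + (lower terms)`, whose leading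
coefficient is nonzero in characteristic zero. So a nonzero element of `J` of minimal `y`-degree
has degree `0`, i.e. lies in `F[x]`.
-/

open Polynomial

namespace OreExtension

variable {R A : Type*} [CommRing R] [Ring A] (i : R →+* A) (y : A)

def degreeLT (m : ℕ) : AddSubgroup A :=
  AddSubgroup.closure {a | ∃ k < m, ∃ d, a = i d * y ^ k}

noncomputable def sumMonomials : (ℕ →₀ R) →+ A :=
  Finsupp.liftAddHom fun n => (AddMonoidHom.mulRight (y ^ n)).comp i.toAddMonoidHom

variable {i y}

theorem sumMonomials_single (n : ℕ) (d : R) : sumMonomials i y (Finsupp.single n d) = i d * y ^ n :=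
  Finsupp.liftAddHom_apply_single _ _ _

theorem monomial_mem_degreeLT {k m : ℕ} (hk : k < m) (d : R) : i d * y ^ k ∈ degreeLT i y m :=
  AddSubgroup.subset_closure ⟨k, hk, d, rfl⟩

theorem degreeLT_mono : Monotone (degreeLT i y) := fun _ _ h =>
  AddSubgroup.closure_mono fun _ ⟨k, hk, d, e⟩ => ⟨k, hk.trans_le h, d, e⟩

theorem degreeLT_zero : degreeLT i y 0 = ⊥ := by
  simp [degreeLT]

theorem map_mul_mem_degreeLT (e : R) {m : ℕ} {b : A} (hb : b ∈ degreeLT i y m) :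
    i e * b ∈ degreeLT i y m := by
  suffices degreeLT i y m ≤ (degreeLT i y m).comap (AddMonoidHom.mulLeft (i e)) from this hb
  refine (AddSubgroup.closure_le _).2 ?_
  rintro _ ⟨k, hk, d, rfl⟩
  rw [SetLike.mem_coe, AddSubgroup.mem_comap, AddMonoidHom.coe_mulLeft, ← mul_assoc, ← map_mul]
  exact monomial_mem_degreeLT hk (e * d)

theorem degreeLT_succ_le (m : ℕ) :
    degreeLT i y (m + 1) ≤
      ((AddMonoidHom.mulRight (y ^ m)).comp i.toAddMonoidHom).range ⊔ degreeLT i y m := by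
  refine (AddSubgroup.closure_le _).2 ?_
  rintro _ ⟨k, hk, d, rfl⟩
  rcases Nat.lt_succ_iff_lt_or_eq.1 hk with hk | rfl
  · exact AddSubgroup.mem_sup_right (monomial_mem_degreeLT hk d)
  · exact AddSubgroup.mem_sup_left ⟨d, rfl⟩

theorem exists_eq_add_of_mem_degreeLT_succ {m : ℕ} {a : A} (ha : a ∈ degreeLT i y (m + 1)) :
    ∃ d, ∃ b ∈ degreeLT i y m, a = i d * y ^ m + b := by
  obtain ⟨_, ⟨d, rfl⟩, b, hb, rfl⟩ := AddSubgroup.mem_sup.1 (degreeLT_succ_le m ha)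
  exact ⟨d, b, hb, rfl⟩

theorem exists_mem_degreeLT (hsurj : Function.Surjective (sumMonomials i y)) (a : A) :
    ∃ n, a ∈ degreeLT i y n := by
  obtain ⟨c, rfl⟩ := hsurj a
  refine ⟨c.support.sup id + 1, sum_mem fun k hk => monomial_mem_degreeLT ?_ _⟩
  exact Nat.lt_succ_of_le (Finset.le_sup (f := id) hk)

theorem degreeLT_le_map_supported (m : ℕ) :
    degreeLT i y m ≤
      (Finsupp.supported R R (Set.Iio m)).toAddSubgroup.map (sumMonomials i y) := by
  refine (AddSubgroup.closure_le _).2 ?_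
  rintro _ ⟨k, hk, d, rfl⟩
  exact ⟨Finsupp.single k d, Finsupp.single_mem_supported R d hk, sumMonomials_single k d⟩

theorem eq_zero_of_monomial_mem_degreeLT (hinj : Function.Injective (sumMonomials i y))
    {m : ℕ} {d : R} (h : i d * y ^ m ∈ degreeLT i y m) : d = 0 := by
  obtain ⟨c, hc, hcd⟩ := degreeLT_le_map_supported m h
  obtain rfl : c = Finsupp.single m d := hinj (hcd.trans (sumMonomials_single m d).symm)
  simpa using (Finsupp.mem_supported' R _).1 hc m (lt_irrefl m)

section Relation

variable {δ : R → R}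

theorem mul_mem_degreeLT_succ (hrel : ∀ r, y * i r = i r * y + i (δ r)) {m : ℕ} {b : A}
    (hb : b ∈ degreeLT i y m) : y * b ∈ degreeLT i y (m + 1) := by
  suffices degreeLT i y m ≤ (degreeLT i y (m + 1)).comap (AddMonoidHom.mulLeft y) from this hb
  refine (AddSubgroup.closure_le _).2 ?_
  rintro _ ⟨k, hk, d, rfl⟩
  have : y * (i d * y ^ k) = i d * y ^ (k + 1) + i (δ d) * y ^ k := by
    rw [← mul_assoc, hrel, add_mul, mul_assoc, ← pow_succ']
  rw [SetLike.mem_coe, AddSubgroup.mem_comap, AddMonoidHom.coe_mulLeft, this]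
  exact add_mem (monomial_mem_degreeLT (by omega) _) (monomial_mem_degreeLT (by omega) _)

theorem pow_succ_mul_sub_mem_degreeLT (hrel : ∀ r, y * i r = i r * y + i (δ r)) (r : R) (n : ℕ) :
    y ^ (n + 1) * i r - i r * y ^ (n + 1) - (n + 1) • (i (δ r) * y ^ n) ∈ degreeLT i y n := by
  induction n with
  | zero => simp [hrel]
  | succ n ih =>
    have key : y ^ (n + 1 + 1) * i r - i r * y ^ (n + 1 + 1) -
          (n + 1 + 1) • (i (δ r) * y ^ (n + 1)) =
        y * (y ^ (n + 1) * i r - i r * y ^ (n + 1) - (n + 1) • (i (δ r) * y ^ n)) +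
          (n + 1) • (i (δ (δ r)) * y ^ n) := by
      rw [mul_sub, mul_sub, mul_smul_comm, ← mul_assoc y (y ^ (n + 1)), ← pow_succ',
        ← mul_assoc y (i r), ← mul_assoc y (i (δ r)), hrel, hrel]
      simp only [add_mul, mul_assoc, ← pow_succ', smul_add, add_smul, one_smul]
      abel
    rw [key]
    exact add_mem (mul_mem_degreeLT_succ hrel ih)
      (nsmul_mem (monomial_mem_degreeLT (Nat.lt_succ_self n) _) _)

theorem monomial_mul_sub_mem_degreeLT (hrel : ∀ r, y * i r = i r * y + i (δ r)) (d r : R)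
    (n : ℕ) : i d * y ^ (n + 1) * i r - i r * (i d * y ^ (n + 1)) -
      (n + 1) • (i (d * δ r) * y ^ n) ∈ degreeLT i y n := by
  have key : i d * y ^ (n + 1) * i r - i r * (i d * y ^ (n + 1)) -
      (n + 1) • (i (d * δ r) * y ^ n) =
      i d * (y ^ (n + 1) * i r - i r * y ^ (n + 1) - (n + 1) • (i (δ r) * y ^ n)) := by
    rw [mul_sub, mul_sub, mul_smul_comm, ← mul_assoc (i r), ← map_mul, mul_comm r, map_mul,
      map_mul, mul_assoc, mul_assoc, mul_assoc]
  rw [key]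
  exact map_mul_mem_degreeLT d (pow_succ_mul_sub_mem_degreeLT hrel r n)

theorem mul_sub_mul_mem_degreeLT (hrel : ∀ r, y * i r = i r * y + i (δ r)) (r : R) {m : ℕ}
    {b : A} (hb : b ∈ degreeLT i y (m + 1)) : b * i r - i r * b ∈ degreeLT i y m := by
  suffices degreeLT i y (m + 1) ≤
      (degreeLT i y m).comap (AddMonoidHom.mulRight (i r) - AddMonoidHom.mulLeft (i r)) from this hb
  refine (AddSubgroup.closure_le _).2 ?_
  rintro _ ⟨k, hk, d, rfl⟩
  rw [SetLike.mem_coe, AddSubgroup.mem_comap, AddMonoidHom.sub_apply, AddMonoidHom.coe_mulLeft,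
    AddMonoidHom.coe_mulRight]
  cases k with
  | zero => simp [← map_mul, mul_comm d r]
  | succ k =>
    rw [← sub_add_cancel (_ - _) ((k + 1) • (i (d * δ r) * y ^ k))]
    exact add_mem (degreeLT_mono (by omega) (monomial_mul_sub_mem_degreeLT hrel d r k))
      (nsmul_mem (monomial_mem_degreeLT (by omega) _) _)

theorem leading_mul_sub_mul_mem_degreeLT (hrel : ∀ r, y * i r = i r * y + i (δ r)) (d r : R)
    {n : ℕ} {b : A} (hb : b ∈ degreeLT i y (n + 1)) :
    (i d * y ^ (n + 1) + b) * i r - i r * (i d * y ^ (n + 1) + b) -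
      i ((n + 1) • (d * δ r)) * y ^ n ∈ degreeLT i y n := by
  have key : (i d * y ^ (n + 1) + b) * i r - i r * (i d * y ^ (n + 1) + b) -
      i ((n + 1) • (d * δ r)) * y ^ n =
      (i d * y ^ (n + 1) * i r - i r * (i d * y ^ (n + 1)) - (n + 1) • (i (d * δ r) * y ^ n)) +
        (b * i r - i r * b) := by
    rw [map_nsmul, smul_mul_assoc]
    noncomm_ring
  rw [key]
  exact add_mem (monomial_mul_sub_mem_degreeLT hrel d r n) (mul_sub_mul_mem_degreeLT hrel r hb)

theorem exists_ne_zero_map_mem_of_mem_degreeLT [IsDomain R] [CharZero R]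
    (hrel : ∀ r, y * i r = i r * y + i (δ r)) (hinj : Function.Injective (sumMonomials i y))
    {x : R} (hx : δ x ≠ 0) (J : TwoSidedIdeal A) (n : ℕ) :
    ∀ a ∈ J, a ≠ 0 → a ∈ degreeLT i y n → ∃ r, r ≠ 0 ∧ i r ∈ J := by
  induction n with
  | zero =>
    intro a _ ha haS
    rw [degreeLT_zero, AddSubgroup.mem_bot] at haS
    exact absurd haS ha
  | succ n ih =>
    intro a haJ ha haS
    obtain ⟨d, b, hb, rfl⟩ := exists_eq_add_of_mem_degreeLT_succ haS
    by_cases hd : d = 0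
    · rw [hd, map_zero, zero_mul, zero_add] at haJ ha
      exact ih b haJ ha hb
    cases n with
    | zero =>
      rw [degreeLT_zero, AddSubgroup.mem_bot] at hb
      rw [hb, pow_zero, mul_one, add_zero] at haJ
      exact ⟨d, hd, haJ⟩
    | succ n =>
      set a := i d * y ^ (n + 1) + b
      have hlead := leading_mul_sub_mul_mem_degreeLT hrel d x hb
      refine ih (a * i x - i x * a)
        (J.sub_mem (J.mul_mem_right _ _ haJ) (J.mul_mem_left _ _ haJ)) ?_
        (mul_sub_mul_mem_degreeLT hrel x haS)
      intro h0
      rw [h0, zero_sub, neg_mem_iff] at hlead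
      exact smul_ne_zero n.succ_ne_zero (mul_ne_zero hd hx)
        (eq_zero_of_monomial_mem_degreeLT hinj hlead)

theorem exists_ne_zero_map_mem [IsDomain R] [CharZero R] (hrel : ∀ r, y * i r = i r * y + i (δ r))
    (hbasis : Function.Bijective (sumMonomials i y)) {x : R} (hx : δ x ≠ 0) (J : TwoSidedIdeal A)
    {a : A} (haJ : a ∈ J) (ha : a ≠ 0) : ∃ r, r ≠ 0 ∧ i r ∈ J :=
  let ⟨n, hn⟩ := exists_mem_degreeLT hbasis.2 a
  exists_ne_zero_map_mem_of_mem_degreeLT hrel hbasis.1 hx J n a haJ ha hn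

end Relation

end OreExtension

/-- Char 0, `h ≠ 0`: every nonzero two-sided ideal of `A_h = F[x][y; δ]`
(`δ(r) = r′h`) meets `F[x]` nontrivially. -/
theorem stmt7 {F A : Type*} [Field F] [CharZero F] [Ring A] [Algebra F A]
    (h : Polynomial F) (hh : h ≠ 0)
    (i : Polynomial F →ₐ[F] A) (y : A)
    (hrel : ∀ r : Polynomial F, y * i r = i r * y + i (derivative r * h))
    (hbasis : Function.Bijective fun c : ℕ →₀ Polynomial F =>
      c.sum fun n d => i d * y ^ n)
    (J : TwoSidedIdeal A) (hJ : ∃ a ∈ J, a ≠ (0 : A)) :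
    ∃ r : Polynomial F, r ≠ 0 ∧ i r ∈ J := by
  obtain ⟨a, haJ, ha⟩ := hJ
  have hX : derivative X * h ≠ 0 := by rwa [derivative_X, one_mul]
  exact OreExtension.exists_ne_zero_map_mem (i := (i : F[X] →+* A)) hrel hbasis hX J haJ ha
end

section
/- Let A be an associative unital F-algebra and let V, W be finite-dimensional irreducible A-modules. Then V ≅ W as A-modules if and only if Ann_A(V) = Ann_A(W). -/
/-!
Let `v₁, …, vₙ` span `V` over `F`. Then `Ann V = ⋂ᵢ Ann(vᵢ)` is the kernel of
`A → Vⁿ, a ↦ (a • vᵢ)ᵢ`, so `A ⧸ Ann V` embeds into `Vⁿ` and is a semisimple module all of whose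
simple submodules are isomorphic to `V`. If `Ann V ⊆ Ann W`, then `a ↦ a • w` for any `w ≠ 0`
makes the simple module `W` a quotient of `A ⧸ Ann V`; in a semisimple module quotients are
isomorphic to submodules, so `W ≅ V`.
-/

open LinearMap

namespace IsIsotypicOfType

variable {R M N S : Type*} [Ring R] [AddCommGroup M] [Module R M] [AddCommGroup N] [Module R N]
  [AddCommGroup S] [Module R S]

theorem pi_self {ι : Type*} [Finite ι] [IsSimpleModule R S] :
    IsIsotypicOfType R (ι → S) S := by
  classical
  refine of_isotypicComponent_eq_top (eq_top_iff.mpr ?_)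
  rw [← iSup_range_single R (fun _ : ι ↦ S), iSup_le_iff]
  intro i
  have := IsSimpleModule.congr (Submodule.topEquiv (R := R) (M := S))
  rw [← Submodule.map_top]
  exact (Submodule.map_le_isotypicComponent ⊤ (single R (fun _ : ι ↦ S) i)).trans_eq
    (Submodule.topEquiv.isotypicComponent_eq)

theorem of_surjective [IsSemisimpleModule R M] (h : IsIsotypicOfType R M S) (f : M →ₗ[R] N)
    (hf : Function.Surjective f) : IsIsotypicOfType R N S := by
  -- in a semisimple module every quotient is isomorphic to a submodule
  obtain ⟨P, ⟨e⟩⟩ := IsSemisimpleModule.exists_submodule_linearEquiv_quotient (ker f)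
  let g : N ≃ₗ[R] P := (f.quotKerEquivOfSurjective hf).symm.trans e.symm
  exact h.of_injective (P.subtype ∘ₗ g.toLinearMap) (P.injective_subtype.comp g.injective)

theorem nonempty_linearEquiv [IsSimpleModule R M] (h : IsIsotypicOfType R M S) :
    Nonempty (M ≃ₗ[R] S) := by
  have := IsSimpleModule.congr (Submodule.topEquiv (R := R) (M := M))
  exact ⟨Submodule.topEquiv.symm.trans (h ⊤).some⟩

end IsIsotypicOfType

theorem IsSimpleModule.nonempty_linearEquiv_of_forall_smul_eq_zero {R V W ι : Type*} [Ring R]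
    [AddCommGroup V] [Module R V] [AddCommGroup W] [Module R W] [Finite ι]
    [IsSimpleModule R V] [IsSimpleModule R W] (v : ι → V)
    (h : ∀ r : R, (∀ i, r • v i = 0) → ∀ w : W, r • w = 0) : Nonempty (V ≃ₗ[R] W) := by
  have := IsSimpleModule.nontrivial R W
  obtain ⟨w, hw⟩ := exists_ne (0 : W)
  let f : R →ₗ[R] ι → V := pi fun i ↦ toSpanSingleton R V (v i)
  have hker : ker f ≤ ker (toSpanSingleton R W w) := fun r hr ↦ h r (congrFun hr) w
  have hf : Function.Injective ((ker f).liftQ f le_rfl) :=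
    ker_eq_bot.mp (Submodule.ker_liftQ_eq_bot _ _ _ le_rfl)
  have := IsSemisimpleModule.of_injective _ hf
  have hg : Function.Surjective ((ker f).liftQ _ hker) := by
    rw [← range_eq_top, Submodule.range_liftQ, range_eq_top]
    exact IsSimpleModule.toSpanSingleton_surjective R hw
  have hW : IsIsotypicOfType R W V :=
    (IsIsotypicOfType.pi_self.of_injective _ hf).of_surjective _ hg
  exact hW.nonempty_linearEquiv.map LinearEquiv.symm

theorem smul_eq_zero_of_span_eq_top {F A V ι : Type*} [CommSemiring F] [Semiring A] [Algebra F A]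
    [AddCommMonoid V] [Module A V] [Module F V] [IsScalarTower F A V] {v : ι → V}
    (hv : Submodule.span F (Set.range v) = ⊤) (a : A) (ha : ∀ i, a • v i = 0) (x : V) :
    a • x = 0 :=
  congr($(ext_on_range (f := DistribSMul.toLinearMap F V a) (g := 0) hv ha) x)

theorem stmt10_general {F A V W : Type*} [Field F] [Ring A] [Algebra F A]
    [AddCommGroup V] [Module A V] [Module F V] [IsScalarTower F A V]
    [AddCommGroup W] [Module A W]
    [IsSimpleModule A V] [IsSimpleModule A W]
    [FiniteDimensional F V] :
    Nonempty (V ≃ₗ[A] W) ↔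
      ∀ a : A, (∀ v : V, a • v = 0) ↔ (∀ w : W, a • w = 0) := by
  constructor
  · rintro ⟨e⟩ a
    simp only [← Module.mem_annihilator, e.annihilator_eq]
  · intro h
    obtain ⟨n, v, hv⟩ := Module.Finite.exists_fin (R := F) (M := V)
    exact IsSimpleModule.nonempty_linearEquiv_of_forall_smul_eq_zero v
      fun a ha ↦ (h a).mp (smul_eq_zero_of_span_eq_top hv a ha)

/-- Finite-dimensional irreducible modules over an `F`-algebra are isomorphic
iff they have the same annihilator. -/
theorem stmt10 {F A V W : Type*} [Field F] [Ring A] [Algebra F A]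
    [AddCommGroup V] [Module A V] [Module F V] [IsScalarTower F A V]
    [AddCommGroup W] [Module A W] [Module F W] [IsScalarTower F A W]
    [IsSimpleModule A V] [IsSimpleModule A W]
    [FiniteDimensional F V] [FiniteDimensional F W] :
    Nonempty (V ≃ₗ[A] W) ↔
      ∀ a : A, (∀ v : V, a • v = 0) ↔ (∀ w : W, a • w = 0) :=
  stmt10_general (F := F)
end

section
/- Let F be a field, h ∈ F[x] nonzero, and A_h the algebra generated by x, y with yx − xy = h. If the Jacobson radical of A_h contains a, then a = 0; i.e., the Jacobson radical of A_h is zero. -/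
open Polynomial Finsupp

section Aux
variable {F A : Type*} [Field F] [Ring A] [Algebra F A]
  (h : Polynomial F) (i : Polynomial F →ₐ[F] A) (y : A)
  (hrel : ∀ r : Polynomial F, y * i r = i r * y + i (derivative r * h))

noncomputable def Tmap : (ℕ →₀ Polynomial F) →+ A :=
  Finsupp.liftAddHom fun n => (AddMonoidHom.mulRight (y ^ n)).comp i.toLinearMap.toAddMonoidHom

theorem Tmap_apply (c : ℕ →₀ Polynomial F) :
    Tmap i y c = c.sum fun n d => i d * y ^ n := rfl

theorem Tmap_single (n : ℕ) (d : Polynomial F) :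
    Tmap i y (single n d) = i d * y ^ n := by
  rw [Tmap_apply, Finsupp.sum_single_index]; simp

theorem Tmap_smul (d : Polynomial F) (c : ℕ →₀ Polynomial F) :
    i d * Tmap i y c = Tmap i y (c.mapRange (d * ·) (mul_zero d)) := by
  rw [Tmap_apply, Tmap_apply, Finsupp.mul_sum, Finsupp.sum_mapRange_index (by simp)]
  refine Finsupp.sum_congr fun n _ => ?_
  rw [← mul_assoc, ← map_mul]

theorem Tmap_shift (c : ℕ →₀ Polynomial F) (n : ℕ) :
    Tmap i y c * y ^ n = Tmap i y (c.mapDomain (· + n)) := by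
  rw [Tmap_apply, Tmap_apply, Finsupp.sum_mul,
    Finsupp.sum_mapDomain_index (by simp) (by intros; rw [map_add, add_mul])]
  refine Finsupp.sum_congr fun k _ => ?_
  rw [mul_assoc, pow_add]

include hrel in
theorem Tmap_ymul (c : ℕ →₀ Polynomial F) :
    y * Tmap i y c = Tmap i y (c.mapDomain (· + 1)
      + c.mapRange (fun p => derivative p * h) (by simp)) := by
  rw [map_add]
  simp only [Tmap_apply]
  rw [Finsupp.mul_sum,
    Finsupp.sum_mapDomain_index (by simp) (by intros; rw [map_add, add_mul]),
    Finsupp.sum_mapRange_index (by simp), ← Finsupp.sum_add]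
  refine Finsupp.sum_congr fun k _ => ?_
  rw [← mul_assoc, hrel, add_mul, mul_assoc, ← pow_succ']

include hrel in
theorem Tmap_comm (n : ℕ) (r : Polynomial F) :
    ∃ c : ℕ →₀ Polynomial F, y ^ n * i r = i r * y ^ n + Tmap i y c
      ∧ ∀ k, n ≤ k → c k = 0 := by
  induction n with
  | zero => exact ⟨0, by simp, by simp⟩
  | succ n ih =>
    obtain ⟨c, hc, hc0⟩ := ih
    refine ⟨single n (derivative r * h) + (c.mapDomain (· + 1)
      + c.mapRange (fun p => derivative p * h) (by simp)), ?_, ?_⟩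
    · rw [pow_succ', mul_assoc, hc, mul_add, ← mul_assoc, hrel, add_mul,
        Tmap_ymul h i y hrel]
      simp only [map_add, Tmap_single, mul_assoc]
      abel
    · intro k hk
      have h1 : (single n (derivative r * h) : ℕ →₀ Polynomial F) k = 0 :=
        Finsupp.single_eq_of_ne (by omega)
      have h2 : (c.mapDomain (· + 1)) k = 0 := by
        obtain ⟨j, rfl⟩ : ∃ j, k = j + 1 := ⟨k - 1, by omega⟩
        rw [Finsupp.mapDomain_apply (fun a b => by omega)]
        exact hc0 j (by omega)
      have h3 : (c.mapRange (fun p => derivative p * h) (by simp)) k = 0 := by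
        rw [Finsupp.mapRange_apply, hc0 k (by omega)]; simp
      rw [Finsupp.add_apply, Finsupp.add_apply, h1, h2, h3]; simp

include hrel in
theorem Tmap_single_mul_single (m n : ℕ) (d e : Polynomial F) :
    ∃ c : ℕ →₀ Polynomial F,
      Tmap i y (single m d) * Tmap i y (single n e)
        = Tmap i y (single (m + n) (d * e) + c) ∧ ∀ k, m + n ≤ k → c k = 0 := by
  obtain ⟨c, hc, hc0⟩ := Tmap_comm h i y hrel m e
  refine ⟨(c.mapDomain (· + n)).mapRange (d * ·) (mul_zero d), ?_, ?_⟩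
  · rw [Tmap_single, Tmap_single, map_add, Tmap_single]
    have e1 : i d * y ^ m * (i e * y ^ n) = i d * (y ^ m * i e * y ^ n) := by
      noncomm_ring
    rw [e1, hc, add_mul, mul_add, Tmap_shift, Tmap_smul]
    congr 1
    rw [map_mul, pow_add]
    noncomm_ring
  · intro k hk
    rw [Finsupp.mapRange_apply]
    obtain ⟨j, rfl⟩ : ∃ j, k = j + n := ⟨k - n, by omega⟩
    rw [Finsupp.mapDomain_apply (fun a b => by omega), hc0 j (by omega), mul_zero]

include hrel in
theorem Tmap_mul (c1 c2 : ℕ →₀ Polynomial F) (h1 : c1.support.Nonempty)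
    (h2 : c2.support.Nonempty) :
    ∃ c3 : ℕ →₀ Polynomial F, Tmap i y c1 * Tmap i y c2 = Tmap i y c3 ∧
      c3 (c1.support.max' h1 + c2.support.max' h2)
        = c1 (c1.support.max' h1) * c2 (c2.support.max' h2) := by
  choose K hK hK0 using fun (m n : ℕ) (d e : Polynomial F) =>
    Tmap_single_mul_single h i y hrel m n d e
  set M := c1.support.max' h1 with hM
  set N := c2.support.max' h2 with hN
  have expand : ∀ c : ℕ →₀ Polynomial F,
      Tmap i y c = c.sum fun m d => Tmap i y (single m d) := by
    intro c
    conv_lhs => rw [← Finsupp.sum_single c]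
    exact map_finsuppSum (Tmap i y) _ _
  refine ⟨c1.sum fun m d => c2.sum fun n e => single (m + n) (d * e) + K m n d e, ?_, ?_⟩
  · have hprod : Tmap i y c1 * Tmap i y c2
        = c1.sum fun m d => c2.sum fun n e =>
            Tmap i y (single m d) * Tmap i y (single n e) := by
      rw [expand c1, expand c2, Finsupp.sum_mul]
      refine Finsupp.sum_congr fun m hm => ?_
      rw [Finsupp.mul_sum]
    rw [hprod, map_finsuppSum]
    refine Finsupp.sum_congr fun m hm => ?_
    rw [map_finsuppSum]
    exact Finsupp.sum_congr fun n hn => hK m n (c1 m) (c2 n)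
  · have hterm : ∀ m ∈ c1.support, ∀ n ∈ c2.support, ¬(m = M ∧ n = N) →
        ((single (m + n) (c1 m * c2 n) + K m n (c1 m) (c2 n)) : ℕ →₀ Polynomial F)
          (M + N) = 0 := by
      intro m hm n hn hne
      have hmM : m ≤ M := Finset.le_max' _ m hm
      have hnN : n ≤ N := Finset.le_max' _ n hn
      have hlt : m + n < M + N := by
        rcases Nat.lt_or_ge m M with hl | hg
        · omega
        · have : m = M := le_antisymm hmM hg
          have : n ≠ N := fun hc => hne ⟨this, hc⟩
          omega
      rw [Finsupp.add_apply, Finsupp.single_eq_of_ne (by omega),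
        hK0 m n (c1 m) (c2 n) (M + N) (by omega), add_zero]
    rw [Finsupp.sum_apply, Finsupp.sum, Finset.sum_eq_single M
      (fun m hm hne => ?_) (fun hM' => absurd (Finset.max'_mem _ h1) hM'),
      Finsupp.sum_apply, Finsupp.sum, Finset.sum_eq_single N
      (fun n hn hne => ?_) (fun hN' => absurd (Finset.max'_mem _ h2) hN')]
    · rw [Finsupp.add_apply, Finsupp.single_eq_same,
        hK0 M N (c1 M) (c2 N) (M + N) le_rfl, add_zero]
    · exact hterm M (Finset.max'_mem _ h1) n hn (fun hc => hne hc.2)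
    · rw [Finsupp.sum_apply, Finsupp.sum]
      exact Finset.sum_eq_zero fun n hn => hterm m hm n hn (fun hc => hne hc.1)


include hrel in
theorem Tmap_key (hbij : Function.Bijective (Tmap i y)) :
    ∀ z w : A, z * w = 1 → ∃ e : Polynomial F, w = i e := by
  intro z w hzw
  obtain ⟨c1, rfl⟩ := hbij.2 z
  obtain ⟨c2, rfl⟩ := hbij.2 w
  have hone : (1 : A) = Tmap i y (single 0 1) := by rw [Tmap_single]; simp
  have hnz : ∀ c : ℕ →₀ Polynomial F, Tmap i y c * Tmap i y c2 = 1 → c ≠ 0 := by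
    intro c hc hc0
    subst hc0
    rw [map_zero, zero_mul, hone] at hc
    have : Tmap i y (single 0 (1 : Polynomial F)) = Tmap i y 0 := by
      rw [map_zero]; exact hc.symm
    simpa [Finsupp.single_eq_zero] using hbij.1 this
  have h1 : c1.support.Nonempty := Finsupp.support_nonempty_iff.2 (hnz c1 hzw)
  have h2 : c2.support.Nonempty := by
    rw [Finsupp.support_nonempty_iff]
    rintro rfl
    rw [map_zero, mul_zero, hone] at hzw
    have : Tmap i y (single 0 (1 : Polynomial F)) = Tmap i y 0 := by
      rw [map_zero]; exact hzw.symm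
    simpa [Finsupp.single_eq_zero] using hbij.1 this
  obtain ⟨c3, hc3, htop⟩ := Tmap_mul h i y hrel c1 c2 h1 h2
  have hc3' : c3 = single 0 1 := hbij.1 (by rw [← hc3, hzw, hone])
  set M := c1.support.max' h1 with hMdef
  set N := c2.support.max' h2 with hNdef
  have hne : c1 M * c2 N ≠ 0 :=
    mul_ne_zero (Finsupp.mem_support_iff.1 (Finset.max'_mem _ h1))
      (Finsupp.mem_support_iff.1 (Finset.max'_mem _ h2))
  have hMN : M + N = 0 := by
    by_contra hc
    rw [hc3', Finsupp.single_eq_of_ne' (Ne.symm hc)] at htop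
    exact hne htop.symm
  have hsupp : c2 = single 0 (c2 0) := by
    refine Finsupp.ext fun k => ?_
    rcases eq_or_ne k 0 with rfl | hk
    · simp
    · rw [Finsupp.single_eq_of_ne' (Ne.symm hk)]
      by_contra hck
      have := Finset.le_max' c2.support k (Finsupp.mem_support_iff.2 hck)
      omega
  refine ⟨c2 0, ?_⟩
  conv_lhs => rw [hsupp]
  simp [Tmap_single]

end Aux

/-- For `h ≠ 0`, the Jacobson radical of `A_h` is zero. -/
theorem stmt11 {F A : Type*} [Field F] [Ring A] [Algebra F A]
    (h : Polynomial F) (hh : h ≠ 0)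
    (i : Polynomial F →ₐ[F] A) (y : A)
    (hrel : ∀ r : Polynomial F, y * i r = i r * y + i (derivative r * h))
    (hbasis : Function.Bijective fun c : ℕ →₀ Polynomial F =>
      c.sum fun n d => i d * y ^ n) :
    (⊥ : Ideal A).jacobson = ⊥ := by
  have hbij : Function.Bijective (Tmap i y) := hbasis
  refine le_antisymm ?_ bot_le
  intro a ha
  rw [Ideal.mem_jacobson_iff] at ha
  rw [Submodule.mem_bot]
  -- step 1 : with b = 1, deduce a = i p for some polynomial p
  obtain ⟨z1, hz1⟩ := ha 1
  rw [Ideal.mem_bot, sub_eq_zero] at hz1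
  have h1 : z1 * (1 * a + 1) = 1 := by rw [mul_add, mul_one, ← mul_assoc]; exact hz1
  obtain ⟨e, he⟩ := Tmap_key h i y hrel hbij z1 _ h1
  rw [one_mul] at he
  have ha1 : a = i (e - 1) := by rw [map_sub, map_one, ← he]; abel
  -- step 2 : with b = y, deduce e - 1 = 0
  obtain ⟨z2, hz2⟩ := ha y
  rw [Ideal.mem_bot, sub_eq_zero] at hz2
  have h2 : z2 * (y * a + 1) = 1 := by rw [mul_add, mul_one, ← mul_assoc]; exact hz2
  obtain ⟨e2, he2⟩ := Tmap_key h i y hrel hbij z2 _ h2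
  have hya : y * a + 1 = i (e - 1) * y + i (derivative (e - 1) * h + 1) := by
    rw [ha1, hrel, map_add, map_one, add_assoc]
  have hkey : i (e - 1) * y = i (e2 - (derivative (e - 1) * h + 1)) := by
    have hms : i (e2 - (derivative (e - 1) * h + 1))
        = i e2 - i (derivative (e - 1) * h + 1) := map_sub i _ _
    rw [hms, ← he2, hya]
    abel
  have hsing : (single 1 (e - 1) : ℕ →₀ Polynomial F)
      = single 0 (e2 - (derivative (e - 1) * h + 1)) := by
    apply hbij.1
    rw [Tmap_single, Tmap_single, pow_one, pow_zero, mul_one]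
    exact hkey
  have he1 : e - 1 = 0 := by
    have := Finsupp.ext_iff.1 hsing 1
    simpa using this
  rw [ha1, he1, map_zero]
end

section
/- Let F be a field, h ∈ F[x], δ the derivation of F[x] with δ(r) = r′h, and λ ∈ F a root of h. Then for every k ≥ 1, δ^k(x) ≡ h′(x)^{k−1} h(x) modulo h(x)². In particular, if char F = p > 0, then δ^p(x)/h(x) evaluated at λ equals h′(λ)^{p−1}. -/
open Polynomial

/-!
Writing `δ r = r′ h`, the Leibniz rule gives `δ (a h) = a′ h² + a h′ h ≡ a h′ h (mod h²)`, and `δ`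
preserves `(h²)` since `δ (g h²) = (g′ h + 2 g h′) h²`. Hence multiplying by `h′` is what `δ` does
to `x`-iterates modulo `h²`, starting from `δ x = h`. Dividing `δ^p(x)` by `h` and evaluating at a
root of `h` kills the `h²`-part and leaves `h′(λ)^{p−1}`.
-/

section

variable {R : Type*} [CommRing R]

theorem sq_dvd_derivative_mul_sub {h r a : R[X]} (hr : h ^ 2 ∣ r - a * h) :
    h ^ 2 ∣ derivative r * h - a * derivative h * h := by
  obtain ⟨g, hg⟩ := hr
  rw [sub_eq_iff_eq_add] at hg
  subst hg
  exact ⟨derivative a + 2 * g * derivative h + derivative g * h, by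
    simp only [derivative_add, derivative_mul, derivative_sq, C_ofNat]
    ring⟩

theorem sq_dvd_iterate_derivative_mul_X_sub (h : R[X]) (k : ℕ) :
    h ^ 2 ∣ (fun r : R[X] => derivative r * h)^[k + 1] X - derivative h ^ k * h := by
  induction k with
  | zero => simp
  | succ k ih =>
    rw [Function.iterate_succ_apply', pow_succ (derivative h)]
    exact sq_dvd_derivative_mul_sub ih

theorem exists_iterate_derivative_mul_X_eq (h : R[X]) {k : ℕ} (hk : 1 ≤ k) :
    ∃ f : R[X], (fun r : R[X] => derivative r * h)^[k] X =
      derivative h ^ (k - 1) * h + f * h ^ 2 := by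
  obtain ⟨j, rfl⟩ := Nat.exists_eq_add_of_le' hk
  obtain ⟨f, hf⟩ := sq_dvd_iterate_derivative_mul_X_sub h j
  exact ⟨f, by rw [Nat.add_sub_cancel]; linear_combination hf⟩

end

/-- For `δ(r) = r′h` on `F[x]`: `δ^k(x) ≡ (h′)^{k−1} h (mod h²)` for all `k ≥ 1`;
in particular, in characteristic `p`, `δ^p(x)/h(x)` evaluated at a root `λ` of `h`
equals `h′(λ)^{p−1}`. -/
theorem stmt14 {F : Type*} [Field F] (h : Polynomial F) (lam : F)
    (hlam : h.eval lam = 0) :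
    (∀ k : ℕ, 1 ≤ k → ∃ f : Polynomial F,
      (fun r : Polynomial F => derivative r * h)^[k] X =
        (derivative h) ^ (k - 1) * h + f * h ^ 2) ∧
    (∀ p : ℕ, p.Prime → CharP F p → ∃ g : Polynomial F,
      (fun r : Polynomial F => derivative r * h)^[p] X = g * h ∧
        g.eval lam = ((derivative h).eval lam) ^ (p - 1)) := by
  refine ⟨fun k hk => exists_iterate_derivative_mul_X_eq h hk, fun p hp _ => ?_⟩
  obtain ⟨f, hf⟩ := exists_iterate_derivative_mul_X_eq h hp.one_lt.le
  exact ⟨derivative h ^ (p - 1) + f * h, by rw [hf]; ring, by simp [hlam]⟩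
end

section
/- Let F be a field of characteristic p > 0 and α, β ∈ F. Then the polynomial g(t) = t^p − α^{p−1} t − β ∈ F[t] either has a root in F or is irreducible over F. -/
/-!
Over an algebraic closure, if `μ` is one root of `g = X^p - a^(p-1) X - b` then every other root
`x` satisfies `(x - μ)^p = a^(p-1) (x - μ)`, so `x - μ` is `a` times an element of the prime field.
If `q` is a monic factor of `g` of degree `0 < m < p`, comparing the coefficient of `X^(m-1)` of
`q` with the sum of its roots shows that `m μ` lies in the base field; as `m ≠ 0` in
characteristic `p`, so does the root `μ`.
-/

open Polynomial

section ArtinSchreier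

variable {K : Type*} [Field K]

noncomputable def artinSchreierPoly (p : ℕ) (a b : K) : K[X] :=
  X ^ p - C (a ^ (p - 1)) * X - C b

theorem artinSchreierPoly_eq (p : ℕ) (a b : K) :
    artinSchreierPoly p a b = X ^ p - (C (a ^ (p - 1)) * X + C b) := by
  rw [artinSchreierPoly, sub_sub]

theorem monic_artinSchreierPoly {p : ℕ} (hp : 1 < p) (a b : K) :
    (artinSchreierPoly p a b).Monic := by
  rw [artinSchreierPoly_eq]
  exact monic_X_pow_sub (degree_linear_le.trans_lt (by exact_mod_cast hp))

theorem natDegree_artinSchreierPoly {p : ℕ} (hp : 1 < p) (a b : K) :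
    (artinSchreierPoly p a b).natDegree = p := by
  rw [artinSchreierPoly_eq, natDegree_sub_eq_left_of_natDegree_lt, natDegree_X_pow]
  · rw [natDegree_X_pow]
    exact natDegree_linear_le.trans_lt hp

theorem map_artinSchreierPoly {L : Type*} [Field L] (f : K →+* L) (p : ℕ) (a b : K) :
    (artinSchreierPoly p a b).map f = artinSchreierPoly p (f a) (f b) := by
  simp [artinSchreierPoly]

theorem isRoot_artinSchreierPoly {p : ℕ} {a b x : K} :
    (artinSchreierPoly p a b).IsRoot x ↔ x ^ p - a ^ (p - 1) * x - b = 0 := by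
  simp [artinSchreierPoly]

variable {p : ℕ} [Fact p.Prime] [CharP K p]

theorem sub_pow_char_eq_of_isRoot {a b x μ : K} (hx : (artinSchreierPoly p a b).IsRoot x)
    (hμ : (artinSchreierPoly p a b).IsRoot μ) : (x - μ) ^ p = a ^ (p - 1) * (x - μ) := by
  rw [isRoot_artinSchreierPoly] at hx hμ
  linear_combination (sub_pow_char x μ) + hx - hμ

theorem sub_mem_of_isRoot_artinSchreierPoly {L : Subfield K} {a b x μ : K} (ha : a ∈ L)
    (hx : (artinSchreierPoly p a b).IsRoot x) (hμ : (artinSchreierPoly p a b).IsRoot μ) :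
    x - μ ∈ L := by
  have hfrob := sub_pow_char_eq_of_isRoot hx hμ
  rcases eq_or_ne a 0 with rfl | ha0
  · rw [zero_pow (Nat.sub_ne_zero_of_lt (Fact.out : p.Prime).one_lt), zero_mul,
      pow_eq_zero_iff (Fact.out : p.Prime).ne_zero] at hfrob
    rw [hfrob]
    exact L.zero_mem
  · have hbot : (x - μ) / a ∈ (⊥ : Subfield K) := by
      rw [Subfield.mem_bot_iff_pow_eq_self K p, div_pow, hfrob, ← pow_sub_one_mul
        (Fact.out : p.Prime).ne_zero]
      field_simp
    rw [← div_mul_cancel₀ (x - μ) ha0]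
    exact L.mul_mem (bot_le (a := L) hbot) ha


theorem exists_isRoot_of_monic_dvd_artinSchreierPoly {F : Type*} [Field F] [CharP F p]
    {a b : F} {q : F[X]} (hq : q.Monic) (hdvd : q ∣ artinSchreierPoly p a b)
    (hm : (q.natDegree : F) ≠ 0) : ∃ t, (artinSchreierPoly p a b).IsRoot t := by
  let φ := algebraMap F (AlgebraicClosure F)
  have : CharP (AlgebraicClosure F) p := charP_of_injective_algebraMap φ.injective p
  set L := φ.fieldRange
  have hsplit : (q.map φ).Splits := IsAlgClosed.splits _
  have hcard : Multiset.card (q.map φ).roots = q.natDegree := by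
    rw [← hq.natDegree_map φ, splits_iff_card_roots.mp hsplit]
  have hroot : ∀ x ∈ (q.map φ).roots, (artinSchreierPoly p (φ a) (φ b)).IsRoot x := by
    intro x hx
    rw [← map_artinSchreierPoly]
    exact (isRoot_of_mem_roots hx).dvd (map_dvd φ hdvd)
  obtain ⟨μ, hμ⟩ := Multiset.card_pos_iff_exists_mem.mp <| by
    rw [hcard]
    exact Nat.pos_of_ne_zero fun h => hm (by rw [h, Nat.cast_zero])
  have hdev : ((q.map φ).roots.map (· - μ)).sum ∈ L :=
    L.multiset_sum_mem _ fun y hy => by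
      obtain ⟨x, hx, rfl⟩ := Multiset.mem_map.mp hy
      exact sub_mem_of_isRoot_artinSchreierPoly ⟨a, rfl⟩ (hroot x hx) (hroot μ hμ)
  have hsum : (q.map φ).roots.sum ∈ L := by
    rw [← neg_neg (q.map φ).roots.sum,
      ← hsplit.nextCoeff_eq_neg_sum_roots_of_monic (hq.map φ), nextCoeff_map_eq]
    exact L.neg_mem ⟨_, rfl⟩
  have hmμ : (q.natDegree : AlgebraicClosure F) * μ ∈ L := by
    have := L.sub_mem hsum hdev
    simpa [Multiset.sum_map_sub, hcard] using this
  have hmK : (q.natDegree : AlgebraicClosure F) ≠ 0 := by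
    simpa using (map_ne_zero φ).mpr hm
  obtain ⟨t, rfl⟩ : μ ∈ L := by
    simpa [hmK] using L.div_mem hmμ (natCast_mem L q.natDegree)
  exact ⟨t, (isRoot_map_iff φ.injective).mp (by rw [map_artinSchreierPoly]; exact hroot _ hμ)⟩

theorem irreducible_artinSchreierPoly_of_forall_not_isRoot {F : Type*} [Field F] [CharP F p]
    {a b : F} (h : ∀ t, ¬ (artinSchreierPoly p a b).IsRoot t) :
    Irreducible (artinSchreierPoly p a b) := by
  have hp := (Fact.out : p.Prime)
  have hmonic := monic_artinSchreierPoly hp.one_lt a b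
  rw [hmonic.irreducible_iff_lt_natDegree_lt, natDegree_artinSchreierPoly hp.one_lt]
  · rintro q hq hdeg hdvd
    rw [Finset.mem_Ioc] at hdeg
    have hm : (q.natDegree : F) ≠ 0 := by
      rw [Ne, CharP.cast_eq_zero_iff F p]
      exact fun hpm => by have := Nat.le_of_dvd hdeg.1 hpm; omega
    exact (exists_isRoot_of_monic_dvd_artinSchreierPoly hq hdvd hm).elim h
  · intro h1
    have := congrArg natDegree h1
    rw [natDegree_artinSchreierPoly hp.one_lt, natDegree_one] at this
    exact hp.ne_zero this

end ArtinSchreier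

/-- In characteristic `p > 0`, the polynomial `t^p − α^{p−1} t − β` either has a root
in `F` or is irreducible over `F`. -/
theorem stmt17 {F : Type*} [Field F] (p : ℕ) (hp : p.Prime) [CharP F p] (α β : F) :
    (∃ t : F, eval t (X ^ p - C (α ^ (p - 1)) * X - C β) = 0) ∨
      Irreducible (X ^ p - C (α ^ (p - 1)) * X - C β) := by
  have := Fact.mk hp
  by_cases hroot : ∃ t, (artinSchreierPoly p α β).IsRoot t
  · exact .inl hroot
  · exact .inr (irreducible_artinSchreierPoly_of_forall_not_isRoot (not_exists.mp hroot))
end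

section
/- Let A be a ring, D a subring of A, and M an A-module. Suppose M is generated over A by an element u with m^k u = 0 for an ideal m of D and some k ≥ 1, where A = D[y; δ] is an Ore extension of D by a derivation δ. Then every element of M is annihilated by some power of m, i.e., M = M^m := {v ∈ M : m^n v = 0 for some n}. -/
/-!
The elements of `M` killed by some power of `m` form an additive subgroup which is stable
under `D` (as `D` is commutative) and under `y`: since `r y = y r - δ(r)` and the Leibniz
rule gives `δ(m^(ℓ+1)) ⊆ m^ℓ`, if `m^n` kills `v` then `m^(n+1)` kills `y v`. As `A` is
spanned by the `d yⁿ`, this subgroup is an `A`-submodule; it contains `u`, hence is `M`.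
-/

theorem Ideal.map_mem_pow_of_mem_pow_succ {R : Type*} [CommSemiring R] (δ : R → R)
    (hadd : ∀ a b, δ (a + b) = δ a + δ b) (hleib : ∀ a b, δ (a * b) = δ a * b + a * δ b)
    (m : Ideal R) : ∀ ℓ : ℕ, ∀ r ∈ m ^ (ℓ + 1), δ r ∈ m ^ ℓ
  | 0, _, _ => by simp
  | ℓ + 1, r, hr => by
    rw [pow_succ] at hr
    refine Submodule.mul_induction_on hr (fun a ha b hb => ?_) (fun a b ha hb => ?_)
    · rw [hleib, pow_succ]
      exact add_mem (Ideal.mul_mem_mul (map_mem_pow_of_mem_pow_succ δ hadd hleib m ℓ a ha) hb)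
        (Ideal.mul_mem_right _ _ ha)
    · rw [hadd]
      exact add_mem ha hb

section PowTorsion

variable {D A M : Type*} [CommRing D] [Ring A] [AddCommGroup M] [Module A M]
  (i : D →+* A) (m : Ideal D)

def powTorsion : AddSubgroup M where
  carrier := {v | ∃ n : ℕ, ∀ r ∈ m ^ n, i r • v = 0}
  zero_mem' := ⟨0, fun _ _ => smul_zero _⟩
  add_mem' := by
    rintro v w ⟨n₁, hv⟩ ⟨n₂, hw⟩
    refine ⟨max n₁ n₂, fun r hr => ?_⟩
    rw [smul_add, hv r (Ideal.pow_le_pow_right (le_max_left _ _) hr),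
      hw r (Ideal.pow_le_pow_right (le_max_right _ _) hr), add_zero]
  neg_mem' := by
    rintro v ⟨n, hv⟩
    exact ⟨n, fun r hr => by rw [smul_neg, hv r hr, neg_zero]⟩

variable {i m}

theorem mem_powTorsion {v : M} : v ∈ powTorsion i m ↔ ∃ n : ℕ, ∀ r ∈ m ^ n, i r • v = 0 :=
  Iff.rfl

theorem map_smul_mem_powTorsion (d : D) {v : M} (hv : v ∈ powTorsion i m) :
    i d • v ∈ powTorsion i m := by
  obtain ⟨n, hn⟩ := hv
  exact ⟨n, fun r hr => by rw [smul_smul, ← map_mul, hn _ (Ideal.mul_mem_right d _ hr)]⟩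

variable (δ : D → D) (hadd : ∀ a b, δ (a + b) = δ a + δ b)
  (hleib : ∀ a b, δ (a * b) = δ a * b + a * δ b) (y : A)
  (hrel : ∀ r : D, y * i r = i r * y + i (δ r))
include hadd hleib hrel

theorem var_smul_mem_powTorsion {v : M} (hv : v ∈ powTorsion i m) :
    y • v ∈ powTorsion i m := by
  obtain ⟨n, hn⟩ := hv
  refine ⟨n + 1, fun r hr => ?_⟩
  have hr_swap : i r * y = y * i r - i (δ r) := eq_sub_of_add_eq (hrel r).symm
  rw [smul_smul, hr_swap, sub_smul, mul_smul,
    hn r (Ideal.pow_le_pow_right n.le_succ hr),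
    hn (δ r) (m.map_mem_pow_of_mem_pow_succ δ hadd hleib n r hr), smul_zero, sub_zero]

theorem smul_mem_powTorsion
    (hspan : Function.Surjective fun c : ℕ →₀ D => c.sum fun n d => i d * y ^ n)
    (a : A) {v : M} (hv : v ∈ powTorsion i m) : a • v ∈ powTorsion i m := by
  have hpow : ∀ n : ℕ, y ^ n • v ∈ powTorsion i m := fun n => by
    induction n with
    | zero => simpa using hv
    | succ n ih =>
      rw [pow_succ', mul_smul]
      exact var_smul_mem_powTorsion δ hadd hleib y hrel ih
  obtain ⟨c, rfl⟩ := hspan a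
  dsimp only
  rw [Finsupp.sum, Finset.sum_smul]
  exact AddSubgroup.sum_mem _ fun n _ => by
    rw [mul_smul]
    exact map_smul_mem_powTorsion _ (hpow n)

end PowTorsion

theorem stmt19_general {D A M : Type*} [CommRing D] [Ring A]
    [AddCommGroup M] [Module A M]
    (δ : D → D) (hadd : ∀ a b, δ (a + b) = δ a + δ b)
    (hleib : ∀ a b, δ (a * b) = δ a * b + a * δ b)
    (i : D →+* A) (y : A)
    (hrel : ∀ r : D, y * i r = i r * y + i (δ r))
    (hbasis : Function.Bijective fun c : ℕ →₀ D => c.sum fun n d => i d * y ^ n)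
    (m : Ideal D) (u : M)
    (hgen : ∀ v : M, ∃ a : A, a • u = v)
    (k : ℕ) (hann : ∀ r ∈ m ^ k, i r • u = 0) :
    ∀ v : M, ∃ n : ℕ, ∀ r ∈ m ^ n, i r • v = 0 := by
  intro v
  obtain ⟨a, rfl⟩ := hgen v
  exact mem_powTorsion.1 <|
    smul_mem_powTorsion δ hadd hleib y hrel hbasis.2 a (mem_powTorsion.2 ⟨k, hann⟩)

/-- If `M = A·u` for an Ore extension `A = D[y; δ]` and `m^k u = 0` for an ideal `m`
of `D` and some `k ≥ 1`, then every element of `M` is annihilated by some power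
of `m`. -/
theorem stmt19 {D A M : Type*} [CommRing D] [Ring A]
    [AddCommGroup M] [Module A M]
    (δ : D → D) (hadd : ∀ a b, δ (a + b) = δ a + δ b)
    (hleib : ∀ a b, δ (a * b) = δ a * b + a * δ b)
    (i : D →+* A) (y : A)
    (hrel : ∀ r : D, y * i r = i r * y + i (δ r))
    (hbasis : Function.Bijective fun c : ℕ →₀ D => c.sum fun n d => i d * y ^ n)
    (m : Ideal D) (u : M)
    (hgen : ∀ v : M, ∃ a : A, a • u = v)
    (k : ℕ) (hk : 1 ≤ k) (hann : ∀ r ∈ m ^ k, i r • u = 0) :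
    ∀ v : M, ∃ n : ℕ, ∀ r ∈ m ^ n, i r • v = 0 :=
  stmt19_general δ hadd hleib i y hrel hbasis m u hgen k hann
end
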